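/- Let φ : L → L' be a surjective homomorphism of co-Heyting algebras (preserving ⊥, ⊤, ⊔, ⊓ and \). Then for every natural number d, φ(dL) = dL', i.e. the image under φ of the set of elements of L of codimension ≥ d is exactly the set of elements of L' of codimension ≥ d. -/

import Mathlib

/-- A prime filter of a bounded lattice: upward closed, closed under `⊓`,
contains `⊤`, does not contain `⊥`, and prime with respect to `⊔`. -/
def IsPrimeFilter {L : Type*} [Lattice L] [BoundedOrder L] (p : Set L) : Prop :=
  (∀ x ∈ p, ∀ y : L, x ≤ y → y ∈ p) ∧
  (∀ x ∈ p, ∀ y ∈ p, x ⊓ y ∈ p) ∧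
  (⊤ : L) ∈ p ∧ (⊥ : L) ∉ p ∧
  ∀ x y : L, x ⊔ y ∈ p → x ∈ p ∨ y ∈ p

/-- `dim a ≥ n`: there is a strictly increasing chain `p 0 ⊊ p 1 ⊊ ⋯ ⊊ p n`
of prime filters with `a ∈ p 0`. -/
def DimGE {L : Type*} [Lattice L] [BoundedOrder L] (a : L) (n : ℕ) : Prop :=
  ∃ p : Fin (n + 1) → Set L, (∀ i, IsPrimeFilter (p i)) ∧
    (∀ i j : Fin (n + 1), i < j → p i ⊂ p j) ∧ a ∈ p 0

/-- `codim a ≥ n`: every prime filter `p` containing `a` admits a strictly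
increasing chain `q n ⊊ ⋯ ⊊ q 1 ⊊ q 0 = p` of prime filters. -/
def CodimGE {L : Type*} [Lattice L] [BoundedOrder L] (a : L) (n : ℕ) : Prop :=
  ∀ p : Set L, IsPrimeFilter p → a ∈ p →
    ∃ q : Fin (n + 1) → Set L, (∀ i, IsPrimeFilter (q i)) ∧
      (∀ i j : Fin (n + 1), i < j → q j ⊂ q i) ∧ q 0 = p

/-- The strong order: `b ≪ a` iff for every `c`, `a ≤ b ⊔ c` implies `a ≤ c`. -/
def StrongBelow {L : Type*} [Lattice L] (b a : L) : Prop :=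
  ∀ c : L, a ≤ b ⊔ c → a ≤ c

/-
Let `heightWitnesses L n` be the set of lattice terms given by `⊤` for `n = 0` and by
`x ⊓ (e \ x)`, with `e` a witness for `n`, for `n + 1`. A prime filter `p` contains a witness
for `n` iff there is a chain of prime filters of length `n` below `p`: if `q ⊊ p` and
`x ∈ p \ q`, then `e ≤ x ⊔ (e \ x)` puts `e \ x` in `q`; conversely, if `x ⊓ (e \ x) ∈ p`, the
prime filter theorem gives a prime filter `q ⊆ p` with `e ∈ q` and `x ∉ q`. By the prime filter
theorem again, the elements of codimension `≥ n` form the ideal generated by the witnesses for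
`n`. Being terms in `⊤`, `⊓` and `\`, the witnesses of `L` are mapped onto those of `L'` by a
surjective co-Heyting homomorphism, and hence so are the ideals they generate.
-/

open Set

namespace Order.Ideal

variable {L L' : Type*}

section SemilatticeSup

variable [SemilatticeSup L] [OrderBot L] {S : Set L} {a : L}

def span (S : Set L) : Ideal L where
  carrier := {a | ∃ t : Finset L, ↑t ⊆ S ∧ a ≤ t.sup id}
  lower' _ _ hba := fun ⟨t, htS, hat⟩ => ⟨t, htS, hba.trans hat⟩
  nonempty' := ⟨⊥, ∅, by simp⟩
  directed' a := by
    classical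
    rintro ⟨s, hsS, has⟩ b ⟨t, htS, hbt⟩
    refine ⟨a ⊔ b, ⟨s ∪ t, ?_, ?_⟩, le_sup_left, le_sup_right⟩
    · rw [Finset.coe_union]
      exact union_subset hsS htS
    · rw [Finset.sup_union]
      exact sup_le_sup has hbt

theorem mem_span : a ∈ span S ↔ ∃ t : Finset L, ↑t ⊆ S ∧ a ≤ t.sup id :=
  Iff.rfl

theorem subset_span : S ⊆ span S :=
  fun a ha => mem_span.mpr ⟨{a}, by simpa using ha, by simp⟩

end SemilatticeSup

theorem image_span [Lattice L] [OrderBot L] [Lattice L'] [OrderBot L'] {F : Type*}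
    [FunLike F L L'] [SupBotHomClass F L L'] [InfHomClass F L L'] (φ : F)
    (hφ : Function.Surjective φ) (S : Set L) :
    φ '' span S = span (φ '' S) := by
  classical
  have map_sup_id (t : Finset L) : φ (t.sup id) = (t.image φ).sup id := by
    rw [map_finset_sup, Finset.sup_image]
    rfl
  ext b
  simp only [mem_image, SetLike.mem_coe, mem_span]
  constructor
  · rintro ⟨a, ⟨t, htS, hat⟩, rfl⟩
    refine ⟨t.image φ, by simpa using image_mono htS, ?_⟩
    exact map_sup_id t ▸ OrderHomClass.mono φ hat
  · rintro ⟨t', ht'S, hbt'⟩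
    obtain ⟨t, htS, rfl⟩ := Finset.subset_set_image_iff.mp ht'S
    obtain ⟨c, rfl⟩ := hφ b
    refine ⟨c ⊓ t.sup id, ⟨t, htS, inf_le_right⟩, ?_⟩
    rw [map_inf, map_sup_id]
    exact inf_eq_left.mpr hbt'

end Order.Ideal

namespace IsPrimeFilter

variable {L : Type*} [Lattice L] [BoundedOrder L] {p : Set L} {x y : L}

theorem mem_of_le (hp : IsPrimeFilter p) (hx : x ∈ p) (hxy : x ≤ y) : y ∈ p :=
  hp.1 x hx y hxy

theorem inf_mem (hp : IsPrimeFilter p) (hx : x ∈ p) (hy : y ∈ p) : x ⊓ y ∈ p :=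
  hp.2.1 x hx y hy

theorem top_mem (hp : IsPrimeFilter p) : ⊤ ∈ p :=
  hp.2.2.1

theorem bot_notMem (hp : IsPrimeFilter p) : ⊥ ∉ p :=
  hp.2.2.2.1

theorem mem_or_mem (hp : IsPrimeFilter p) (hxy : x ⊔ y ∈ p) : x ∈ p ∨ y ∈ p :=
  hp.2.2.2.2 x y hxy

theorem exists_mem_of_mem_span (hp : IsPrimeFilter p) {S : Set L}
    (hx : x ∈ Order.Ideal.span S) (hxp : x ∈ p) : ∃ e ∈ S, e ∈ p := by
  obtain ⟨t, htS, hxt⟩ := Order.Ideal.mem_span.mp hx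
  by_contra! h
  refine Finset.sup_induction (p := (· ∉ p)) hp.bot_notMem (fun a ha b hb hab => ?_)
    (fun e he => h e (htS he)) (hp.mem_of_le hxp hxt)
  exact (hp.mem_or_mem hab).elim ha hb

end IsPrimeFilter

theorem Order.Ideal.IsPrime.isPrimeFilter_compl {L : Type*} [Lattice L] [BoundedOrder L]
    {I : Order.Ideal L} (hI : I.IsPrime) : IsPrimeFilter (I : Set L)ᶜ :=
  ⟨fun _ hx _ hxy hy => hx (I.lower hxy hy),
    fun _ hx _ hy hxy => (hI.mem_or_mem hxy).elim hx hy,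
    hI.top_notMem, fun h => h I.bot_mem,
    fun _ _ hxy => not_and_or.mp fun h => hxy (I.sup_mem h.1 h.2)⟩

theorem exists_isPrimeFilter_of_notMem {L : Type*} [DistribLattice L] [BoundedOrder L]
    {I : Order.Ideal L} {a : L} (ha : a ∉ I) : ∃ p, IsPrimeFilter p ∧ a ∈ p ∧ Disjoint p I := by
  have hdisj : Disjoint (Order.PFilter.principal a : Set L) I :=
    disjoint_left.mpr fun _ hy hyI => ha (I.lower hy hyI)
  obtain ⟨J, hJ, hIJ, hJa⟩ := DistribLattice.prime_ideal_of_disjoint_filter_ideal hdisj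
  exact ⟨(J : Set L)ᶜ, hJ.isPrimeFilter_compl, disjoint_left.mp hJa le_rfl,
    disjoint_compl_left.mono_right hIJ⟩

theorem IsPrimeFilter.exists_subset_of_sdiff_mem {L : Type*} [CoheytingAlgebra L] {p : Set L}
    (hp : IsPrimeFilter p) {a x : L} (h : a \ x ∈ p) :
    ∃ q, IsPrimeFilter q ∧ q ⊆ p ∧ a ∈ q ∧ x ∉ q := by
  set I := Order.Ideal.span pᶜ ⊔ Order.Ideal.principal x
  have haI : a ∉ I := by
    rw [Lattice.mem_ideal_sup_principal]
    rintro ⟨j, hj, haj⟩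
    obtain ⟨e, he, hep⟩ := hp.exists_mem_of_mem_span hj (hp.mem_of_le h (sdiff_le_iff'.mpr haj))
    exact he hep
  obtain ⟨q, hq, haq, hqI⟩ := exists_isPrimeFilter_of_notMem haI
  refine ⟨q, hq, fun y hyq => ?_, haq, fun hxq => ?_⟩
  · by_contra hyp
    exact disjoint_left.mp hqI hyq
      ((le_sup_left : Order.Ideal.span pᶜ ≤ I) (Order.Ideal.subset_span hyp))
  · exact disjoint_left.mp hqI hxq
      ((le_sup_right : Order.Ideal.principal x ≤ I) Order.Ideal.mem_principal_self)

section Height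

variable {L : Type*} [Lattice L] [BoundedOrder L] {p q : Set L} {n : ℕ}

def HeightGE (p : Set L) (n : ℕ) : Prop :=
  ∃ c : Fin (n + 1) → Set L, (∀ i, IsPrimeFilter (c i)) ∧ StrictAnti c ∧ c 0 = p

theorem codimGE_iff_forall_heightGE {a : L} :
    CodimGE a n ↔ ∀ p, IsPrimeFilter p → a ∈ p → HeightGE p n :=
  Iff.rfl

theorem heightGE_zero (hp : IsPrimeFilter p) : HeightGE p 0 :=
  ⟨fun _ => p, fun _ => hp, Subsingleton.strictAnti (α := Fin 1) _, rfl⟩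

theorem HeightGE.exists_ssubset (h : HeightGE p (n + 1)) :
    ∃ q, IsPrimeFilter q ∧ q ⊂ p ∧ HeightGE q n := by
  obtain ⟨c, hc, hanti, rfl⟩ := h
  exact ⟨c 1, hc 1, hanti Fin.zero_lt_one, Fin.tail c, fun i => hc i.succ,
    hanti.comp_strictMono (Fin.strictMono_succ), rfl⟩

theorem HeightGE.of_ssubset (hp : IsPrimeFilter p) (hqp : q ⊂ p) (h : HeightGE q n) :
    HeightGE p (n + 1) := by
  obtain ⟨c, hc, hanti, rfl⟩ := h
  exact ⟨Matrix.vecCons p c, Fin.cases hp hc, hanti.vecCons hqp, rfl⟩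

end Height

section Witnesses

variable {L L' : Type*} [CoheytingAlgebra L] [CoheytingAlgebra L']

def heightWitnesses (L : Type*) [CoheytingAlgebra L] : ℕ → Set L
  | 0 => {⊤}
  | n + 1 => image2 (fun x e => x ⊓ (e \ x)) univ (heightWitnesses L n)

theorem heightGE_iff_exists_heightWitnesses_mem {p : Set L} (hp : IsPrimeFilter p) (n : ℕ) :
    HeightGE p n ↔ ∃ e ∈ heightWitnesses L n, e ∈ p := by
  induction n generalizing p with
  | zero => exact ⟨fun _ => ⟨⊤, rfl, hp.top_mem⟩, fun _ => heightGE_zero hp⟩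
  | succ n ih =>
    constructor
    · intro h
      obtain ⟨q, hq, hqp, hqn⟩ := h.exists_ssubset
      obtain ⟨e, he, heq⟩ := (ih hq).mp hqn
      obtain ⟨x, hxp, hxq⟩ := exists_of_ssubset hqp
      have hexq : e \ x ∈ q := (hq.mem_or_mem (hq.mem_of_le heq le_sup_sdiff)).resolve_left hxq
      exact ⟨_, mem_image2_of_mem (mem_univ x) he, hp.inf_mem hxp (hqp.subset hexq)⟩
    · rintro ⟨_, ⟨x, -, e, he, rfl⟩, hxep⟩
      obtain ⟨q, hq, hqp, heq, hxq⟩ :=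
        hp.exists_subset_of_sdiff_mem (hp.mem_of_le hxep inf_le_right)
      exact ((ih hq).mpr ⟨e, he, heq⟩).of_ssubset hp
        ⟨hqp, fun hpq => hxq (hpq (hp.mem_of_le hxep inf_le_left))⟩

theorem setOf_codimGE_eq_span (n : ℕ) :
    {a : L | CodimGE a n} = Order.Ideal.span (heightWitnesses L n) := by
  ext a
  rw [mem_ofPred_eq, codimGE_iff_forall_heightGE]
  refine ⟨fun ha => ?_, fun ha p hp hap => ?_⟩
  · by_contra h
    obtain ⟨p, hp, hap, hdisj⟩ := exists_isPrimeFilter_of_notMem h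
    obtain ⟨e, he, hep⟩ := (heightGE_iff_exists_heightWitnesses_mem hp n).mp (ha p hp hap)
    exact disjoint_left.mp hdisj hep (Order.Ideal.subset_span he)
  · exact (heightGE_iff_exists_heightWitnesses_mem hp n).mpr
      (hp.exists_mem_of_mem_span ha hap)

theorem image_heightWitnesses {F : Type*} [FunLike F L L'] [CoheytingHomClass F L L'] (φ : F)
    (hφ : Function.Surjective φ) (n : ℕ) : φ '' heightWitnesses L n = heightWitnesses L' n := by
  induction n with
  | zero => simp [heightWitnesses]
  | succ n ih =>
    rw [heightWitnesses, heightWitnesses, ← ih, ← image_univ_of_surjective hφ]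
    exact image_image2_distrib fun x e => by rw [map_inf, map_sdiff]

end Witnesses

theorem stmt7 {L L' : Type*} [CoheytingAlgebra L] [CoheytingAlgebra L']
    (φ : CoheytingHom L L') (hφ : Function.Surjective φ) (d : ℕ) :
    φ '' {a : L | CodimGE a d} = {b : L' | CodimGE b d} := by
  rw [setOf_codimGE_eq_span, setOf_codimGE_eq_span, Order.Ideal.image_span φ hφ,
    image_heightWitnesses φ hφ]
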